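/- Let σ(z) = 1/(1+e^{−z}) be the sigmoid function, H an RKHS on X, μ a Borel measure, and f, g ∈ H with ∫ e^{f} dμ < ∞ and ∫ e^{g} dμ < ∞. Then for every U > ‖f−g‖, 0 ≤ TV(P_f,P_g) − STV_{H_U,σ}(P_f,P_g) ≤ (‖f−g‖/U)·(1 − TV(P_f,P_g)) ≤ ‖f−g‖/U. -/

import Mathlib

open MeasureTheory Filter
open scoped ENNReal NNReal

noncomputable def TV {X : Type*} [MeasurableSpace X] (P Q : Measure X) : ℝ :=
  ⨆ A : {A : Set X // MeasurableSet A}, |(P A.1).toReal - (Q A.1).toReal|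

noncomputable def STV {X : Type*} [MeasurableSpace X] (𝒰 : Set (X → ℝ)) (σ : ℝ → ℝ)
    (P Q : Measure X) : ℝ :=
  ⨆ ub : 𝒰 × ℝ, |∫ x, σ (ub.1.1 x - ub.2) ∂P - ∫ x, σ (ub.1.1 x - ub.2) ∂Q|

noncomputable def stepFun : ℝ → ℝ := fun x => if 0 ≤ x then 1 else 0

noncomputable def sigmoid : ℝ → ℝ := fun z => 1 / (1 + Real.exp (-z))

def AssumptionB (σ : ℝ → ℝ) : Prop :=
  Continuous σ ∧ StrictMono σ ∧ Tendsto σ atBot (nhds 0) ∧ Tendsto σ atTop (nhds 1) ∧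
    ∀ z, σ z + σ (-z) = 1

def DecayRate (σ : ℝ → ℝ) (C₀ : ℝ) (lam : ℝ → ℝ) : Prop :=
  Tendsto lam atTop (nhds 0) ∧ ∀ c, C₀ < c → ∀ t, 1 ≤ t → σ (-(c * Real.log t)) * (t - 1) ≤ lam c

noncomputable def evalH {X H : Type*} [NormedAddCommGroup H] [InnerProductSpace ℝ H]
    (φ : X → H) (f : H) : X → ℝ := fun x => (inner ℝ f (φ x) : ℝ)

noncomputable def ballFuns {X H : Type*} [NormedAddCommGroup H] [InnerProductSpace ℝ H]
    (φ : X → H) (U : ℝ) : Set (X → ℝ) := evalH φ '' {h : H | ‖h‖ ≤ U}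

noncomputable def logPartition {X H : Type*} [MeasurableSpace X] [NormedAddCommGroup H]
    [InnerProductSpace ℝ H] (μ : Measure X) (φ : X → H) (f : H) : ℝ :=
  Real.log (∫ x, Real.exp (evalH φ f x) ∂μ)

noncomputable def Pexp {X H : Type*} [MeasurableSpace X] [NormedAddCommGroup H]
    [InnerProductSpace ℝ H] (μ : Measure X) (φ : X → H) (f : H) : Measure X :=
  μ.withDensity fun x => ENNReal.ofReal (Real.exp (evalH φ f x - logPartition μ φ f))

noncomputable def empMeasure {X : Type*} [MeasurableSpace X] {n : ℕ} (xs : Fin n → X) : Measure X :=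
  (n : ℝ≥0∞)⁻¹ • ∑ i, Measure.dirac (xs i)

noncomputable def STVb {X : Type*} [MeasurableSpace X] (𝒰 : Set (X → ℝ)) (σ : ℝ → ℝ) (U : ℝ)
    (P Q : Measure X) : ℝ :=
  ⨆ ub : 𝒰 × {b : ℝ // |b| ≤ U}, |∫ x, σ (ub.1.1 x - ub.2.1) ∂P - ∫ x, σ (ub.1.1 x - ub.2.1) ∂Q|

/-!
Both distances are suprema of `|∫ h (p_f - p_g) dμ|` over `[0,1]`-valued test functions `h`
(indicators for TV, `σ (u - b)` for STV). Since `∫ (p_f - p_g) dμ = 0`, every such integral is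
bounded by `∫ (p_f - p_g)⁺ dμ`, which is the TV distance (take `h` the indicator of `{p_g ≤ p_f}`).
For the gap, take `u = t (f - g)` with `t = U / ‖f - g‖ ≥ 1` and `b = t (A(f) - A(g))`, so that
`σ (u - b) = σ (t log (p_f / p_g))`. Bernoulli's inequality gives pointwise
`(p_f - p_g)⁺ - σ (t log (p_f / p_g)) (p_f - p_g) ≤ t⁻¹ min (p_f, p_g)`, and
`∫ min (p_f, p_g) dμ = 1 - TV`.
-/

lemma sigmoid_eq_real_sigmoid : sigmoid = Real.sigmoid := by
  ext z
  unfold sigmoid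
  rw [Real.sigmoid_def, one_div]

namespace Real

lemma sigmoid_mem_Icc (z : ℝ) : sigmoid z ∈ Set.Icc 0 1 :=
  ⟨sigmoid_nonneg z, sigmoid_le_one z⟩

/-- Bernoulli's inequality `1 + t (e^z - 1) ≤ e^{tz}` for `t ≥ 1`. -/
lemma sigmoid_neg_mul_mul_exp_sub_one_le {t z : ℝ} (ht : 1 ≤ t) (hz : 0 ≤ z) :
    sigmoid (-(t * z)) * (exp z - 1) ≤ t⁻¹ := by
  have hbern : 1 + t * (exp z - 1) ≤ exp (t * z) := by
    have := one_add_mul_self_le_rpow_one_add (s := exp z - 1) (by linarith [add_one_le_exp z]) ht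
    rwa [add_sub_cancel, ← exp_mul, mul_comm z] at this
  rw [sigmoid_def, neg_neg, inv_mul_le_iff₀ (by positivity), ← div_eq_mul_inv,
    le_div_iff₀ (by linarith)]
  linarith [exp_pos (t * z)]

lemma sigmoid_neg_mul_mul_exp_sub_exp_le {t a b : ℝ} (ht : 1 ≤ t) (hba : b ≤ a) :
    sigmoid (-(t * (a - b))) * (exp a - exp b) ≤ t⁻¹ * exp b := by
  have hsplit : exp a - exp b = (exp (a - b) - 1) * exp b := by
    rw [sub_mul, ← exp_add, sub_add_cancel, one_mul]
  rw [hsplit, ← mul_assoc]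
  exact mul_le_mul_of_nonneg_right
    (sigmoid_neg_mul_mul_exp_sub_one_le ht (sub_nonneg.2 hba)) (exp_pos b).le

lemma max_exp_sub_exp_sub_sigmoid_mul_le {t : ℝ} (ht : 1 ≤ t) (a b : ℝ) :
    max (exp a - exp b) 0 - sigmoid (t * (a - b)) * (exp a - exp b) ≤
      t⁻¹ * min (exp a) (exp b) := by
  rcases le_total b a with hba | hab
  · have := sigmoid_neg_mul_mul_exp_sub_exp_le ht hba
    rw [sigmoid_neg] at this
    rw [max_eq_left (by simpa using hba), min_eq_right (exp_le_exp.2 hba)]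
    linarith
  · have := sigmoid_neg_mul_mul_exp_sub_exp_le ht hab
    rw [show -(t * (b - a)) = t * (a - b) by ring] at this
    rw [max_eq_right (by simpa using hab), min_eq_left (exp_le_exp.2 hab)]
    linarith

end Real

section DensityDifference

variable {X : Type*} [MeasurableSpace X] {μ : Measure X} {d h : X → ℝ}

lemma MeasureTheory.Integrable.mul_of_mem_Icc (hd : Integrable d μ) (hh : AEStronglyMeasurable h μ)
    (h01 : ∀ x, h x ∈ Set.Icc 0 1) : Integrable (fun x => h x * d x) μ :=
  hd.bdd_mul hh (Eventually.of_forall fun x => by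
    rw [Real.norm_of_nonneg (h01 x).1]; exact (h01 x).2)

lemma integral_mul_le_integral_max_zero (hd : Integrable d μ) (hh : AEStronglyMeasurable h μ)
    (h01 : ∀ x, h x ∈ Set.Icc 0 1) : ∫ x, h x * d x ∂μ ≤ ∫ x, max (d x) 0 ∂μ := by
  refine integral_mono (hd.mul_of_mem_Icc hh h01) hd.pos_part fun x => ?_
  rcases le_total 0 (d x) with hdx | hdx
  · rw [max_eq_left hdx]
    exact mul_le_of_le_one_left hdx (h01 x).2
  · rw [max_eq_right hdx]
    exact mul_nonpos_of_nonneg_of_nonpos (h01 x).1 hdx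

/-- Applying the one-sided bound to `h` and to `1 - h` gives both sides, since `∫ d = 0`. -/
lemma abs_integral_mul_le_integral_max_zero (hd : Integrable d μ) (hd0 : ∫ x, d x ∂μ = 0)
    (hh : AEStronglyMeasurable h μ) (h01 : ∀ x, h x ∈ Set.Icc 0 1) :
    |∫ x, h x * d x ∂μ| ≤ ∫ x, max (d x) 0 ∂μ := by
  have h01' : ∀ x, 1 - h x ∈ Set.Icc 0 1 := fun x =>
    ⟨sub_nonneg.2 (h01 x).2, sub_le_self _ (h01 x).1⟩
  have hcompl : ∫ x, (1 - h x) * d x ∂μ = -∫ x, h x * d x ∂μ := by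
    simp_rw [sub_mul, one_mul]
    rw [integral_sub hd (hd.mul_of_mem_Icc hh h01), hd0, zero_sub]
  have hupper := integral_mul_le_integral_max_zero hd hh h01
  have hlower := integral_mul_le_integral_max_zero (h := fun x => 1 - h x) hd
    (aestronglyMeasurable_const.sub hh) h01'
  rw [abs_le]
  constructor <;> linarith

lemma integral_max_zero_sub_integral_mul_le {p q : X → ℝ} {ε : ℝ} (hp : Integrable p μ)
    (hq : Integrable q μ) (hh : AEStronglyMeasurable h μ) (h01 : ∀ x, h x ∈ Set.Icc 0 1)
    (hgap : ∀ x, max (p x - q x) 0 - h x * (p x - q x) ≤ ε * min (p x) (q x)) :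
    ∫ x, max (p x - q x) 0 ∂μ - ∫ x, h x * (p x - q x) ∂μ ≤
      ε * (∫ x, p x ∂μ - ∫ x, max (p x - q x) 0 ∂μ) := by
  have hpq : Integrable (fun x => p x - q x) μ := hp.sub hq
  have hmin : ∀ x, min (p x) (q x) = p x - max (p x - q x) 0 := fun x => by
    rcases le_total (p x) (q x) with h | h
    · rw [min_eq_left h, max_eq_right (sub_nonpos.2 h), sub_zero]
    · rw [min_eq_right h, max_eq_left (sub_nonneg.2 h), sub_sub_cancel]
  have hmin_int : Integrable (fun x => min (p x) (q x)) μ := by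
    simp_rw [hmin]; exact hp.sub hpq.pos_part
  calc ∫ x, max (p x - q x) 0 ∂μ - ∫ x, h x * (p x - q x) ∂μ
      = ∫ x, (max (p x - q x) 0 - h x * (p x - q x)) ∂μ :=
        (integral_sub hpq.pos_part (hpq.mul_of_mem_Icc hh h01)).symm
    _ ≤ ∫ x, ε * min (p x) (q x) ∂μ :=
        integral_mono (hpq.pos_part.sub (hpq.mul_of_mem_Icc hh h01)) (hmin_int.const_mul ε) hgap
    _ = ε * (∫ x, p x ∂μ - ∫ x, max (p x - q x) 0 ∂μ) := by
        simp_rw [integral_const_mul, hmin]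
        rw [integral_sub hp hpq.pos_part]

end DensityDifference

section WithDensity

variable {X : Type*} [MeasurableSpace X] {μ : Measure X} {p q : X → ℝ}

lemma integral_withDensity_ofReal (hp : Measurable p) (hp0 : ∀ x, 0 ≤ p x) (h : X → ℝ) :
    ∫ x, h x ∂μ.withDensity (fun x => ENNReal.ofReal (p x)) = ∫ x, h x * p x ∂μ := by
  rw [integral_withDensity_eq_integral_toReal_smul hp.ennreal_ofReal
    (Eventually.of_forall fun _ => ENNReal.ofReal_lt_top)]
  simp_rw [ENNReal.toReal_ofReal (hp0 _), smul_eq_mul, mul_comm]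

lemma integral_withDensity_sub_integral_withDensity {h : X → ℝ} (hp : Measurable p)
    (hq : Measurable q) (hp0 : ∀ x, 0 ≤ p x) (hq0 : ∀ x, 0 ≤ q x) (hpi : Integrable p μ)
    (hqi : Integrable q μ) (hh : AEStronglyMeasurable h μ) (h01 : ∀ x, h x ∈ Set.Icc 0 1) :
    ∫ x, h x ∂μ.withDensity (fun x => ENNReal.ofReal (p x)) -
        ∫ x, h x ∂μ.withDensity (fun x => ENNReal.ofReal (q x)) =
      ∫ x, h x * (p x - q x) ∂μ := by
  simp_rw [integral_withDensity_ofReal hp hp0, integral_withDensity_ofReal hq hq0, mul_sub]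
  exact (integral_sub (hpi.mul_of_mem_Icc hh h01) (hqi.mul_of_mem_Icc hh h01)).symm

/-- The supremum is attained at the set `{q ≤ p}`. -/
theorem TV_withDensity_ofReal (hp : Measurable p) (hq : Measurable q) (hp0 : ∀ x, 0 ≤ p x)
    (hq0 : ∀ x, 0 ≤ q x) (hpi : Integrable p μ) (hqi : Integrable q μ)
    (hpq : ∫ x, p x ∂μ = ∫ x, q x ∂μ) :
    TV (μ.withDensity fun x => ENNReal.ofReal (p x)) (μ.withDensity fun x => ENNReal.ofReal (q x))
      = ∫ x, max (p x - q x) 0 ∂μ := by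
  have hind : ∀ (A : Set X) x, A.indicator (1 : X → ℝ) x ∈ Set.Icc 0 1 := fun A x => by
    by_cases hx : x ∈ A <;> simp [hx]
  have hdiff : ∀ A, MeasurableSet A →
      ((μ.withDensity fun x => ENNReal.ofReal (p x)) A).toReal -
          ((μ.withDensity fun x => ENNReal.ofReal (q x)) A).toReal =
        ∫ x, A.indicator 1 x * (p x - q x) ∂μ := fun A hA => by
    rw [← measureReal_def, ← measureReal_def, ← integral_indicator_one hA,
      ← integral_indicator_one hA]
    exact integral_withDensity_sub_integral_withDensity hp hq hp0 hq0 hpi hqi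
      (aestronglyMeasurable_const.indicator hA) (hind _)
  have hbound : ∀ A : {A : Set X // MeasurableSet A},
      |((μ.withDensity fun x => ENNReal.ofReal (p x)) A.1).toReal -
          ((μ.withDensity fun x => ENNReal.ofReal (q x)) A.1).toReal| ≤
        ∫ x, max (p x - q x) 0 ∂μ := fun A => by
    rw [hdiff A.1 A.2]
    exact abs_integral_mul_le_integral_max_zero (hpi.sub hqi)
      (by rw [integral_sub hpi hqi, hpq, sub_self]) (aestronglyMeasurable_const.indicator A.2)
      (hind _)
  have hS : MeasurableSet {x | q x ≤ p x} := measurableSet_le hq hp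
  refine le_antisymm (Real.iSup_le hbound (integral_nonneg fun x => le_max_right _ _)) ?_
  refine le_ciSup_of_le ⟨_, Set.forall_mem_range.2 hbound⟩ ⟨_, hS⟩ ?_
  rw [hdiff _ hS]
  refine le_of_eq_of_le (integral_congr_ae (Eventually.of_forall fun x => ?_)) (le_abs_self _)
  by_cases hx : q x ≤ p x
  · simp [hx]
  · simp [Set.indicator_of_notMem (show x ∉ {x | q x ≤ p x} from hx), (not_le.1 hx).le]

variable {𝒰 : Set (X → ℝ)} {σ : ℝ → ℝ}

lemma abs_integral_comp_sub_withDensity_le (hσ : Measurable σ) (hσ01 : ∀ z, σ z ∈ Set.Icc 0 1)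
    (h𝒰 : ∀ u ∈ 𝒰, Measurable u) (hp : Measurable p) (hq : Measurable q) (hp0 : ∀ x, 0 ≤ p x)
    (hq0 : ∀ x, 0 ≤ q x) (hpi : Integrable p μ) (hqi : Integrable q μ)
    (hpq : ∫ x, p x ∂μ = ∫ x, q x ∂μ) (ub : 𝒰 × ℝ) :
    |∫ x, σ (ub.1.1 x - ub.2) ∂μ.withDensity (fun x => ENNReal.ofReal (p x)) -
        ∫ x, σ (ub.1.1 x - ub.2) ∂μ.withDensity (fun x => ENNReal.ofReal (q x))| ≤
      ∫ x, max (p x - q x) 0 ∂μ := by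
  have hmeas : AEStronglyMeasurable (fun x => σ (ub.1.1 x - ub.2)) μ :=
    (hσ.comp ((h𝒰 _ ub.1.2).sub measurable_const)).aestronglyMeasurable
  rw [integral_withDensity_sub_integral_withDensity hp hq hp0 hq0 hpi hqi hmeas fun _ => hσ01 _]
  exact abs_integral_mul_le_integral_max_zero (hpi.sub hqi)
    (by rw [integral_sub hpi hqi, hpq, sub_self]) hmeas fun _ => hσ01 _

theorem STV_withDensity_ofReal_le (hσ : Measurable σ) (hσ01 : ∀ z, σ z ∈ Set.Icc 0 1)
    (h𝒰 : ∀ u ∈ 𝒰, Measurable u) (hp : Measurable p) (hq : Measurable q) (hp0 : ∀ x, 0 ≤ p x)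
    (hq0 : ∀ x, 0 ≤ q x) (hpi : Integrable p μ) (hqi : Integrable q μ)
    (hpq : ∫ x, p x ∂μ = ∫ x, q x ∂μ) :
    STV 𝒰 σ (μ.withDensity fun x => ENNReal.ofReal (p x))
        (μ.withDensity fun x => ENNReal.ofReal (q x)) ≤ ∫ x, max (p x - q x) 0 ∂μ :=
  Real.iSup_le (abs_integral_comp_sub_withDensity_le hσ hσ01 h𝒰 hp hq hp0 hq0 hpi hqi hpq)
    (integral_nonneg fun _ => le_max_right _ _)

lemma integral_comp_sub_mul_sub_le_STV (hσ : Measurable σ) (hσ01 : ∀ z, σ z ∈ Set.Icc 0 1)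
    (h𝒰 : ∀ u ∈ 𝒰, Measurable u) (hp : Measurable p) (hq : Measurable q) (hp0 : ∀ x, 0 ≤ p x)
    (hq0 : ∀ x, 0 ≤ q x) (hpi : Integrable p μ) (hqi : Integrable q μ)
    (hpq : ∫ x, p x ∂μ = ∫ x, q x ∂μ) {u : X → ℝ} (hu : u ∈ 𝒰) (b : ℝ) :
    ∫ x, σ (u x - b) * (p x - q x) ∂μ ≤
      STV 𝒰 σ (μ.withDensity fun x => ENNReal.ofReal (p x))
        (μ.withDensity fun x => ENNReal.ofReal (q x)) := by
  refine le_ciSup_of_le ⟨_, Set.forall_mem_range.2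
    (abs_integral_comp_sub_withDensity_le hσ hσ01 h𝒰 hp hq hp0 hq0 hpi hqi hpq)⟩ (⟨u, hu⟩, b) ?_
  rw [integral_withDensity_sub_integral_withDensity (h := fun x => σ (u x - b)) hp hq hp0 hq0
    hpi hqi (hσ.comp ((h𝒰 u hu).sub measurable_const)).aestronglyMeasurable fun _ => hσ01 _]
  exact le_abs_self _

theorem TV_sub_STV_withDensity_le (hσ : Measurable σ) (hσ01 : ∀ z, σ z ∈ Set.Icc 0 1)
    (h𝒰 : ∀ u ∈ 𝒰, Measurable u) (hp : Measurable p) (hq : Measurable q) (hp0 : ∀ x, 0 ≤ p x)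
    (hq0 : ∀ x, 0 ≤ q x) (hpi : Integrable p μ) (hqi : Integrable q μ)
    (hp1 : ∫ x, p x ∂μ = 1) (hq1 : ∫ x, q x ∂μ = 1) {u : X → ℝ} (hu : u ∈ 𝒰) (b ε : ℝ)
    (hgap : ∀ x, max (p x - q x) 0 - σ (u x - b) * (p x - q x) ≤ ε * min (p x) (q x)) :
    TV (μ.withDensity fun x => ENNReal.ofReal (p x)) (μ.withDensity fun x => ENNReal.ofReal (q x))
        - STV 𝒰 σ (μ.withDensity fun x => ENNReal.ofReal (p x))
          (μ.withDensity fun x => ENNReal.ofReal (q x)) ≤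
      ε * (1 - TV (μ.withDensity fun x => ENNReal.ofReal (p x))
        (μ.withDensity fun x => ENNReal.ofReal (q x))) := by
  have hpq := hp1.trans hq1.symm
  have hSTV := integral_comp_sub_mul_sub_le_STV hσ hσ01 h𝒰 hp hq hp0 hq0 hpi hqi hpq hu b
  have hdefect := integral_max_zero_sub_integral_mul_le (h := fun x => σ (u x - b)) hpi hqi
    (hσ.comp ((h𝒰 u hu).sub measurable_const)).aestronglyMeasurable (fun _ => hσ01 _) hgap
  rw [TV_withDensity_ofReal hp hq hp0 hq0 hpi hqi hpq]
  rw [hp1] at hdefect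
  linarith

end WithDensity

lemma evalH_smul_sub {X H : Type*} [NormedAddCommGroup H] [InnerProductSpace ℝ H] (φ : X → H)
    (t : ℝ) (f g : H) (x : X) : evalH φ (t • (f - g)) x = t * (evalH φ f x - evalH φ g x) := by
  simp only [evalH, real_inner_smul_left, inner_sub_left]

section ExponentialFamily

variable {X H : Type*} [MeasurableSpace X] [NormedAddCommGroup H] [InnerProductSpace ℝ H]
  {μ : Measure X} {φ : X → H}

lemma integral_exp_sub_log_integral_exp {u : X → ℝ} (hu : Integrable (fun x => Real.exp (u x)) μ)
    (hμ : μ ≠ 0) : ∫ x, Real.exp (u x - Real.log (∫ y, Real.exp (u y) ∂μ)) ∂μ = 1 := by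
  have : NeZero μ := ⟨hμ⟩
  simp_rw [Real.exp_sub]
  rw [integral_div, Real.exp_log (integral_exp_pos hu), div_self (integral_exp_pos hu).ne']

/-- The density `p_f` of the paper. -/
noncomputable def expFamilyDensity (μ : Measure X) (φ : X → H) (f : H) : X → ℝ :=
  fun x => Real.exp (evalH φ f x - logPartition μ φ f)

lemma Pexp_eq_withDensity (μ : Measure X) (φ : X → H) (f : H) :
    Pexp μ φ f = μ.withDensity fun x => ENNReal.ofReal (expFamilyDensity μ φ f x) :=
  rfl

lemma measurable_expFamilyDensity {f : H} (hf : Measurable (evalH φ f)) :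
    Measurable (expFamilyDensity μ φ f) :=
  (hf.sub_const _).exp

lemma expFamilyDensity_nonneg (f : H) (x : X) : 0 ≤ expFamilyDensity μ φ f x :=
  (Real.exp_pos _).le

lemma integrable_expFamilyDensity {f : H} (hf : Integrable (fun x => Real.exp (evalH φ f x)) μ) :
    Integrable (expFamilyDensity μ φ f) μ := by
  unfold expFamilyDensity
  simp_rw [Real.exp_sub]
  exact hf.div_const _

lemma integral_expFamilyDensity {f : H} (hf : Integrable (fun x => Real.exp (evalH φ f x)) μ)
    (hμ : μ ≠ 0) : ∫ x, expFamilyDensity μ φ f x ∂μ = 1 :=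
  integral_exp_sub_log_integral_exp hf hμ

lemma exists_mem_ballFuns_sigmoid_defect_le (μ : Measure X) (φ : X → H) {f g : H} {U : ℝ}
    (hU : ‖f - g‖ < U) : ∃ w ∈ ballFuns φ U, ∃ b, ∀ x,
      max (expFamilyDensity μ φ f x - expFamilyDensity μ φ g x) 0 -
          Real.sigmoid (w x - b) * (expFamilyDensity μ φ f x - expFamilyDensity μ φ g x) ≤
        ‖f - g‖ / U * min (expFamilyDensity μ φ f x) (expFamilyDensity μ φ g x) := by
  rcases eq_or_ne f g with rfl | hfg
  · refine ⟨evalH φ 0, ⟨0, by simpa using ((norm_nonneg _).trans_lt hU).le, rfl⟩, 0,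
      fun x => ?_⟩
    simp
  have hfg : 0 < ‖f - g‖ := norm_pos_iff.2 (sub_ne_zero.2 hfg)
  set t := U / ‖f - g‖
  have ht : 1 ≤ t := (one_le_div hfg).2 hU.le
  refine ⟨evalH φ (t • (f - g)), ⟨t • (f - g), ?_, rfl⟩,
    t * (logPartition μ φ f - logPartition μ φ g), fun x => ?_⟩
  · rw [Set.mem_ofPred_eq, norm_smul, Real.norm_of_nonneg (by positivity),
      div_mul_cancel₀ _ hfg.ne']
  · have hexp := Real.max_exp_sub_exp_sub_sigmoid_mul_le ht
      (evalH φ f x - logPartition μ φ f) (evalH φ g x - logPartition μ φ g)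
    rw [inv_div] at hexp
    have hlog : evalH φ (t • (f - g)) x - t * (logPartition μ φ f - logPartition μ φ g) =
        t * (evalH φ f x - logPartition μ φ f - (evalH φ g x - logPartition μ φ g)) := by
      rw [evalH_smul_sub]
      ring
    rw [hlog]
    exact hexp

end ExponentialFamily

/-- for the sigmoid function, the gap between the TV distance and the STV
distance over `H_U` between two members of the kernel exponential family is at most
`(‖f-g‖/U)·(1 - TV) ≤ ‖f-g‖/U` whenever `U > ‖f-g‖`. -/
theorem stv_sigmoid_kernel_exp_gap {X : Type*} [MeasurableSpace X]
    {H : Type*} [NormedAddCommGroup H] [InnerProductSpace ℝ H]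
    (φ : X → H) (hmeas : ∀ h : H, Measurable (evalH φ h))
    (μ : Measure X) (hμ : μ ≠ 0)
    (f g : H)
    (hf : Integrable (fun x => Real.exp (evalH φ f x)) μ)
    (hg : Integrable (fun x => Real.exp (evalH φ g x)) μ)
    (U : ℝ) (hU : ‖f - g‖ < U) :
    0 ≤ TV (Pexp μ φ f) (Pexp μ φ g) - STV (ballFuns φ U) sigmoid (Pexp μ φ f) (Pexp μ φ g) ∧
      TV (Pexp μ φ f) (Pexp μ φ g) - STV (ballFuns φ U) sigmoid (Pexp μ φ f) (Pexp μ φ g) ≤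
        (‖f - g‖ / U) * (1 - TV (Pexp μ φ f) (Pexp μ φ g)) ∧
      (‖f - g‖ / U) * (1 - TV (Pexp μ φ f) (Pexp μ φ g)) ≤ ‖f - g‖ / U := by
  have hU0 : 0 < U := (norm_nonneg _).trans_lt hU
  have hσ : Measurable Real.sigmoid := continuous_sigmoid.measurable
  have hball : ∀ u ∈ ballFuns φ U, Measurable u := by
    rintro _ ⟨h, -, rfl⟩
    exact hmeas h
  have hp := measurable_expFamilyDensity (μ := μ) (hmeas f)
  have hq := measurable_expFamilyDensity (μ := μ) (hmeas g)
  have hpi := integrable_expFamilyDensity hf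
  have hqi := integrable_expFamilyDensity hg
  have hp1 := integral_expFamilyDensity hf hμ
  have hq1 := integral_expFamilyDensity hg hμ
  have hpq := hp1.trans hq1.symm
  rw [sigmoid_eq_real_sigmoid, Pexp_eq_withDensity, Pexp_eq_withDensity]
  obtain ⟨w, hw, b, hdefect⟩ := exists_mem_ballFuns_sigmoid_defect_le μ φ hU
  have hTV := TV_withDensity_ofReal hp hq (expFamilyDensity_nonneg f) (expFamilyDensity_nonneg g)
    hpi hqi hpq
  have hTV0 : 0 ≤ TV _ _ := hTV ▸ integral_nonneg fun _ => le_max_right _ _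
  have hSTV := STV_withDensity_ofReal_le hσ Real.sigmoid_mem_Icc hball hp hq
    (expFamilyDensity_nonneg f) (expFamilyDensity_nonneg g) hpi hqi hpq
  refine ⟨by linarith, ?_, mul_le_of_le_one_right (by positivity) (by linarith)⟩
  exact TV_sub_STV_withDensity_le hσ Real.sigmoid_mem_Icc hball hp hq (expFamilyDensity_nonneg f)
    (expFamilyDensity_nonneg g) hpi hqi hp1 hq1 hw b _ hdefect
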